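/- arXiv:2601.20287 — 3 statements merged into one kernel-verified Lean document; each statement's English description precedes it below -/
import Mathlib

section
/- Let T > 0, let Φ : ℝ → ℝ be continuously differentiable on [0,T] with Φ(0) = Φ(T), and let O : ℝ → ℝ be measurable with O_min ≤ O(t) ≤ O_max for all t ∈ [0,T]. Then |∫₀ᵀ O(t) Φ'(t) dt| ≤ ((O_max − O_min)/2) · ∫₀ᵀ |Φ'(t)| dt. -/
/-- Variation bound on the loop area: if `Φ` is continuously
differentiable on `[0,T]` with `Φ 0 = Φ T` and `O` is measurable with
`Omin ≤ O t ≤ Omax` on `[0,T]`, then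
`|∫₀ᵀ O t * Φ' t dt| ≤ ((Omax − Omin)/2) * ∫₀ᵀ |Φ' t| dt`. -/
theorem loop_area_variation_bound
    (T : ℝ) (hT : 0 < T)
    (Φ Φ' O : ℝ → ℝ) (Omin Omax : ℝ)
    (hΦ : ∀ t ∈ Set.Icc (0:ℝ) T, HasDerivAt Φ (Φ' t) t)
    (hΦ'cont : ContinuousOn Φ' (Set.Icc (0:ℝ) T))
    (hclosed : Φ 0 = Φ T)
    (hO : Measurable O)
    (hObd : ∀ t ∈ Set.Icc (0:ℝ) T, Omin ≤ O t ∧ O t ≤ Omax) :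
    |∫ t in (0:ℝ)..T, O t * Φ' t| ≤ (Omax - Omin) / 2 * ∫ t in (0:ℝ)..T, |Φ' t| := by
  set c : ℝ := (Omax + Omin) / 2 with hc
  set d : ℝ := (Omax - Omin) / 2 with hd
  have huv : Set.uIcc (0:ℝ) T = Set.Icc 0 T := Set.uIcc_of_le hT.le
  -- Φ' interval integrable
  have hΦ'int : IntervalIntegrable Φ' MeasureTheory.volume 0 T :=
    (hΦ'cont.mono (by rw [huv])).intervalIntegrable
  -- bound on O
  have hObd' : ∀ t ∈ Set.Icc (0:ℝ) T, |O t - c| ≤ d := by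
    intro t ht
    rcases hObd t ht with ⟨h1, h2⟩
    rw [abs_le]
    constructor <;> simp only [hc, hd] <;> linarith
  -- integrability of (O - c) * Φ'
  have hmeas : MeasureTheory.AEStronglyMeasurable (fun t => (O t - c) * Φ' t)
      (MeasureTheory.volume.restrict (Set.Icc (0:ℝ) T)) := by
    refine MeasureTheory.AEStronglyMeasurable.mul ?_ ?_
    · exact ((hO.sub measurable_const).aestronglyMeasurable)
    · exact (hΦ'cont.aemeasurable measurableSet_Icc).aestronglyMeasurable
  have hΦ'bd : ∃ M, ∀ t ∈ Set.Icc (0:ℝ) T, |Φ' t| ≤ M := by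
    obtain ⟨M, hM⟩ := (isCompact_Icc.image_of_continuousOn hΦ'cont).isBounded.exists_norm_le
    exact ⟨M, fun t ht => hM _ ⟨t, ht, rfl⟩⟩
  obtain ⟨M, hM⟩ := hΦ'bd
  have hint : IntervalIntegrable (fun t => (O t - c) * Φ' t) MeasureTheory.volume 0 T := by
    rw [intervalIntegrable_iff, Set.uIoc_of_le hT.le]
    refine MeasureTheory.Integrable.mono' (g := fun _ => d * M)
      (MeasureTheory.integrable_const _)
      (hmeas.mono_measure (MeasureTheory.Measure.restrict_mono Set.Ioc_subset_Icc_self le_rfl)) ?_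
    filter_upwards [MeasureTheory.ae_restrict_mem measurableSet_Ioc] with t ht
    have h1 := hObd' t (Set.Ioc_subset_Icc_self ht)
    have h2 := hM t (Set.Ioc_subset_Icc_self ht)
    have hd0 : 0 ≤ d := le_trans (abs_nonneg _) h1
    calc ‖(O t - c) * Φ' t‖ = |O t - c| * |Φ' t| := abs_mul _ _
      _ ≤ d * M := mul_le_mul h1 h2 (abs_nonneg _) hd0
  have hintO : IntervalIntegrable (fun t => O t * Φ' t) MeasureTheory.volume 0 T := by
    have := hint.add (hΦ'int.const_mul c)
    refine this.congr ?_
    intro t _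
    ring
  -- ∫ Φ' = 0
  have hFTC : ∫ t in (0:ℝ)..T, Φ' t = 0 := by
    rw [intervalIntegral.integral_eq_sub_of_hasDerivAt (fun t ht => hΦ t (by rwa [huv] at ht))
      hΦ'int, ← hclosed, sub_self]
  -- split
  have hsplit : ∫ t in (0:ℝ)..T, O t * Φ' t = ∫ t in (0:ℝ)..T, (O t - c) * Φ' t := by
    have : ∫ t in (0:ℝ)..T, (O t - c) * Φ' t
        = (∫ t in (0:ℝ)..T, O t * Φ' t) - c * ∫ t in (0:ℝ)..T, Φ' t := by
      rw [← intervalIntegral.integral_const_mul, ← intervalIntegral.integral_sub hintO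
        (hΦ'int.const_mul c)]
      congr 1; funext t; ring
    rw [this, hFTC]; ring
  rw [hsplit]
  calc |∫ t in (0:ℝ)..T, (O t - c) * Φ' t| ≤ ∫ t in (0:ℝ)..T, |(O t - c) * Φ' t| :=
        intervalIntegral.abs_integral_le_integral_abs hT.le
    _ ≤ ∫ t in (0:ℝ)..T, d * |Φ' t| := by
        refine intervalIntegral.integral_mono_on hT.le hint.abs
          ((hΦ'int.abs).const_mul d) ?_
        intro t ht
        rw [abs_mul]
        exact mul_le_mul_of_nonneg_right (hObd' t ht) (abs_nonneg _)
    _ = d * ∫ t in (0:ℝ)..T, |Φ' t| := intervalIntegral.integral_const_mul _ _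
end

section
/- Let T > 0, 0 < u* < T, and let Φ : ℝ → ℝ be continuously differentiable on [0,T], strictly increasing on [0,u*] and strictly decreasing on [u*,T], with Φ(0) = Φ(T) = Φ_min and Φ(u*) = Φ_max. Let O : ℝ → ℝ be continuous on [0,T], and let ψ↑, ψ↓ be the inverses of Φ on [0,u*] and [u*,T] respectively. If there exists δ > 0 such that O(ψ↑(φ)) − O(ψ↓(φ)) ≥ δ for all φ ∈ [Φ_min,Φ_max], then ∫₀ᵀ O(t) Φ'(t) dt ≥ δ · (Φ_max − Φ_min). -/
open Set

lemma inv_continuousOn_aux {a b c d : ℝ} (f ψ : ℝ → ℝ)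
    (hf : StrictMonoOn f (Set.Icc a b)) (hfa : f a = c) (hfb : f b = d)
    (hmem : ∀ φ ∈ Set.Icc c d, ψ φ ∈ Set.Icc a b)
    (hinv : ∀ φ ∈ Set.Icc c d, f (ψ φ) = φ) :
    ContinuousOn ψ (Set.Icc c d) := by
  rcases le_or_gt c d with hcd | hcd
  swap
  · rw [Set.Icc_eq_empty hcd.not_ge]; exact continuousOn_empty _
  have hab : a ≤ b := by
    have h1 := hmem c ⟨le_rfl, hcd⟩
    exact h1.1.trans h1.2
  have hinj := hf.injOn
  have hψc : ψ c = a := by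
    apply hinj (hmem c ⟨le_rfl, hcd⟩) ⟨le_rfl, hab⟩
    rw [hinv c ⟨le_rfl, hcd⟩, hfa]
  have hψd : ψ d = b := by
    apply hinj (hmem d ⟨hcd, le_rfl⟩) ⟨hab, le_rfl⟩
    rw [hinv d ⟨hcd, le_rfl⟩, hfb]
  have hmono : StrictMonoOn ψ (Set.Icc c d) := by
    intro x hx y hy hxy
    have := hf.lt_iff_lt (hmem x hx) (hmem y hy)
    rw [hinv x hx, hinv y hy] at this
    exact this.mp hxy
  rcases eq_or_lt_of_le hcd with rfl | hcd'
  · intro x hx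
    have : x = c := le_antisymm hx.2 hx.1
    subst this
    rw [Set.Icc_self]
    exact continuousWithinAt_singleton
  -- main case c < d
  have hright : ∀ x ∈ Set.Icc c d, x < d → ContinuousWithinAt ψ (Set.Ici x) x := by
    intro x hx hxd
    apply StrictMonoOn.continuousWithinAt_right_of_exists_between hmono
    · exact Icc_mem_nhdsGE_of_mem ⟨hx.1, hxd⟩
    · intro b' hb'
      have hψxb : ψ x < b := by
        rw [← hψd]; exact hmono hx ⟨hcd, le_rfl⟩ hxd
      set y := min b' b with hy
      have hψxy : ψ x < y := lt_min hb' hψxb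
      have hymem : y ∈ Set.Icc a b := ⟨(hmem x hx).1.trans hψxy.le, min_le_right _ _⟩
      refine ⟨f y, ?_, ?_⟩
      · constructor
        · rw [← hfa]; exact hf.monotoneOn ⟨le_rfl, hab⟩ hymem hymem.1
        · rw [← hfb]; exact hf.monotoneOn hymem ⟨hab, le_rfl⟩ hymem.2
      · have hfyIcc : f y ∈ Set.Icc c d := by
          constructor
          · rw [← hfa]; exact hf.monotoneOn ⟨le_rfl, hab⟩ hymem hymem.1
          · rw [← hfb]; exact hf.monotoneOn hymem ⟨hab, le_rfl⟩ hymem.2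
        have : ψ (f y) = y := hinj (hmem _ hfyIcc) hymem (hinv _ hfyIcc)
        rw [this]
        exact ⟨hψxy, min_le_left _ _⟩
  have hleft : ∀ x ∈ Set.Icc c d, c < x → ContinuousWithinAt ψ (Set.Iic x) x := by
    intro x hx hcx
    apply StrictMonoOn.continuousWithinAt_left_of_exists_between hmono
    · exact Icc_mem_nhdsLE_of_mem ⟨hcx, hx.2⟩
    · intro b' hb'
      have hψxa : a < ψ x := by
        rw [← hψc]; exact hmono ⟨le_rfl, hcd⟩ hx hcx
      set y := max b' a with hy
      have hψxy : y < ψ x := max_lt hb' hψxa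
      have hymem : y ∈ Set.Icc a b := ⟨le_max_right _ _, hψxy.le.trans (hmem x hx).2⟩
      have hfyIcc : f y ∈ Set.Icc c d := by
        constructor
        · rw [← hfa]; exact hf.monotoneOn ⟨le_rfl, hab⟩ hymem hymem.1
        · rw [← hfb]; exact hf.monotoneOn hymem ⟨hab, le_rfl⟩ hymem.2
      refine ⟨f y, hfyIcc, ?_⟩
      have : ψ (f y) = y := hinj (hmem _ hfyIcc) hymem (hinv _ hfyIcc)
      rw [this]
      exact ⟨le_max_left _ _, hψxy⟩
  intro x hx
  rcases eq_or_lt_of_le hx.1 with h | hcx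
  · exact (hright x hx (h ▸ hcd')).mono (h ▸ Set.Icc_subset_Ici_self)
  rcases eq_or_lt_of_le hx.2 with h | hxd
  · exact (hleft x hx hcx).mono (h ▸ Set.Icc_subset_Iic_self)
  · exact (continuousAt_iff_continuous_left_right.2
      ⟨hleft x hx hcx, hright x hx hxd⟩).continuousWithinAt

/-- Lower bound from a uniform branch separation: under the
single-turning-point hypotheses, if the up-branch exceeds the down-branch by at
least `δ > 0` throughout `[Φmin, Φmax]`, then the loop area satisfies
`∫₀ᵀ O t * Φ' t dt ≥ δ (Φmax − Φmin)`. -/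
theorem loop_area_lower_bound_from_branch_gap
    (T ustar : ℝ) (hT : 0 < T) (hu1 : 0 < ustar) (hu2 : ustar < T)
    (Φ Φ' O : ℝ → ℝ) (Φmin Φmax : ℝ)
    (hΦ : ∀ t ∈ Set.Icc (0:ℝ) T, HasDerivAt Φ (Φ' t) t)
    (hΦ'cont : ContinuousOn Φ' (Set.Icc (0:ℝ) T))
    (hup : StrictMonoOn Φ (Set.Icc 0 ustar))
    (hdown : StrictAntiOn Φ (Set.Icc ustar T))
    (hΦ0 : Φ 0 = Φmin) (hΦT : Φ T = Φmin) (hΦstar : Φ ustar = Φmax)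
    (hOcont : ContinuousOn O (Set.Icc (0:ℝ) T))
    (ψup ψdown : ℝ → ℝ)
    (hψup_mem : ∀ φ ∈ Set.Icc Φmin Φmax, ψup φ ∈ Set.Icc 0 ustar)
    (hψdown_mem : ∀ φ ∈ Set.Icc Φmin Φmax, ψdown φ ∈ Set.Icc ustar T)
    (hψup : ∀ φ ∈ Set.Icc Φmin Φmax, Φ (ψup φ) = φ)
    (hψdown : ∀ φ ∈ Set.Icc Φmin Φmax, Φ (ψdown φ) = φ)
    (δ : ℝ) (hδ : 0 < δ)
    (hgap : ∀ φ ∈ Set.Icc Φmin Φmax, δ ≤ O (ψup φ) - O (ψdown φ)) :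
    δ * (Φmax - Φmin) ≤ ∫ t in (0:ℝ)..T, O t * Φ' t := by
  have hsub_up : Set.Icc (0:ℝ) ustar ⊆ Set.Icc 0 T := Set.Icc_subset_Icc le_rfl hu2.le
  have hsub_down : Set.Icc ustar T ⊆ Set.Icc (0:ℝ) T := Set.Icc_subset_Icc hu1.le le_rfl
  have hminmax : Φmin < Φmax := by
    rw [← hΦ0, ← hΦstar]
    exact hup ⟨le_rfl, hu1.le⟩ ⟨hu1.le, le_rfl⟩ hu1
  have himg_up : ∀ t ∈ Set.Icc (0:ℝ) ustar, Φ t ∈ Set.Icc Φmin Φmax := fun t ht =>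
    ⟨hΦ0 ▸ hup.monotoneOn ⟨le_rfl, hu1.le⟩ ht ht.1,
     hΦstar ▸ hup.monotoneOn ht ⟨hu1.le, le_rfl⟩ ht.2⟩
  have himg_down : ∀ t ∈ Set.Icc ustar T, Φ t ∈ Set.Icc Φmin Φmax := fun t ht =>
    ⟨hΦT ▸ hdown.antitoneOn ht ⟨hu2.le, le_rfl⟩ ht.2,
     hΦstar ▸ hdown.antitoneOn ⟨le_rfl, hu2.le⟩ ht ht.1⟩
  -- continuity of the inverse branches
  have hψupcont : ContinuousOn ψup (Set.Icc Φmin Φmax) :=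
    inv_continuousOn_aux Φ ψup hup hΦ0 hΦstar hψup_mem hψup
  have hψdowncont : ContinuousOn ψdown (Set.Icc Φmin Φmax) := by
    have hg : StrictMonoOn (fun t => Φ (-t)) (Set.Icc (-T) (-ustar)) := by
      intro x hx y hy hxy
      have hx' : -x ∈ Set.Icc ustar T := ⟨by linarith [hx.2], by linarith [hx.1]⟩
      have hy' : -y ∈ Set.Icc ustar T := ⟨by linarith [hy.2], by linarith [hy.1]⟩
      exact hdown hy' hx' (neg_lt_neg hxy)
    have h1 : (fun t => Φ (-t)) (-T) = Φmin := by simp [hΦT]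
    have h2 : (fun t => Φ (-t)) (-ustar) = Φmax := by simp [hΦstar]
    have hmem' : ∀ φ ∈ Set.Icc Φmin Φmax, -(ψdown φ) ∈ Set.Icc (-T) (-ustar) := by
      intro φ hφ
      have := hψdown_mem φ hφ
      exact ⟨neg_le_neg this.2, neg_le_neg this.1⟩
    have hinv' : ∀ φ ∈ Set.Icc Φmin Φmax, (fun t => Φ (-t)) (-(ψdown φ)) = φ := by
      intro φ hφ; simp [hψdown φ hφ]
    have h := inv_continuousOn_aux (fun t => Φ (-t)) (fun φ => -(ψdown φ)) hg h1 h2 hmem' hinv'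
    have h' := h.neg
    exact h'.congr (fun x _ => by simp)
  have hOup : ContinuousOn (O ∘ ψup) (Set.Icc Φmin Φmax) :=
    hOcont.comp hψupcont fun φ hφ => hsub_up (hψup_mem φ hφ)
  have hOdown : ContinuousOn (O ∘ ψdown) (Set.Icc Φmin Φmax) :=
    hOcont.comp hψdowncont fun φ hφ => hsub_down (hψdown_mem φ hφ)
  -- the inverses really invert on the time side
  have hfix_up : ∀ t ∈ Set.Icc (0:ℝ) ustar, ψup (Φ t) = t := fun t ht =>
    hup.injOn (hψup_mem _ (himg_up t ht)) ht (hψup _ (himg_up t ht))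
  have hfix_down : ∀ t ∈ Set.Icc ustar T, ψdown (Φ t) = t := fun t ht =>
    hdown.injOn (hψdown_mem _ (himg_down t ht)) ht (hψdown _ (himg_down t ht))
  -- change of variables on the up sweep
  have himgsub_up : Φ '' Set.uIcc 0 ustar ⊆ Set.Icc Φmin Φmax := by
    rw [Set.uIcc_of_le hu1.le]
    rintro _ ⟨t, ht, rfl⟩
    exact himg_up t ht
  have himgsub_down : Φ '' Set.uIcc ustar T ⊆ Set.Icc Φmin Φmax := by
    rw [Set.uIcc_of_le hu2.le]
    rintro _ ⟨t, ht, rfl⟩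
    exact himg_down t ht
  have hchg_up : (∫ t in (0:ℝ)..ustar, O t * Φ' t) = ∫ φ in Φmin..Φmax, O (ψup φ) := by
    have h1 : (∫ t in (0:ℝ)..ustar, O t * Φ' t)
        = ∫ t in (0:ℝ)..ustar, Φ' t • ((O ∘ ψup) ∘ Φ) t := by
      apply intervalIntegral.integral_congr
      intro t ht
      rw [Set.uIcc_of_le hu1.le] at ht
      simp [Function.comp, hfix_up t ht, mul_comm]
    rw [h1, intervalIntegral.integral_comp_smul_deriv'
      (fun x hx => hΦ x (hsub_up (by rwa [Set.uIcc_of_le hu1.le] at hx)))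
      (hΦ'cont.mono (by rw [Set.uIcc_of_le hu1.le]; exact hsub_up))
      (hOup.mono himgsub_up), hΦ0, hΦstar]
    rfl
  have hchg_down : (∫ t in ustar..T, O t * Φ' t) = ∫ φ in Φmax..Φmin, O (ψdown φ) := by
    have h1 : (∫ t in ustar..T, O t * Φ' t)
        = ∫ t in ustar..T, Φ' t • ((O ∘ ψdown) ∘ Φ) t := by
      apply intervalIntegral.integral_congr
      intro t ht
      rw [Set.uIcc_of_le hu2.le] at ht
      simp [Function.comp, hfix_down t ht, mul_comm]
    rw [h1, intervalIntegral.integral_comp_smul_deriv'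
      (fun x hx => hΦ x (hsub_down (by rwa [Set.uIcc_of_le hu2.le] at hx)))
      (hΦ'cont.mono (by rw [Set.uIcc_of_le hu2.le]; exact hsub_down))
      (hOdown.mono himgsub_down), hΦstar, hΦT]
    rfl
  -- split the integral
  have hcontprod : ContinuousOn (fun t => O t * Φ' t) (Set.Icc (0:ℝ) T) :=
    hOcont.mul hΦ'cont
  have hi1 : IntervalIntegrable (fun t => O t * Φ' t) MeasureTheory.volume 0 ustar :=
    (hcontprod.mono (by rw [Set.uIcc_of_le hu1.le]; exact hsub_up)).intervalIntegrable
  have hi2 : IntervalIntegrable (fun t => O t * Φ' t) MeasureTheory.volume ustar T :=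
    (hcontprod.mono (by rw [Set.uIcc_of_le hu2.le]; exact hsub_down)).intervalIntegrable
  have hsplit := intervalIntegral.integral_add_adjacent_intervals hi1 hi2
  rw [← hsplit, hchg_up, hchg_down]
  rw [intervalIntegral.integral_symm Φmin Φmax]
  -- final comparison
  have hint_up : IntervalIntegrable (fun φ => O (ψup φ)) MeasureTheory.volume Φmin Φmax :=
    (hOup.mono (by rw [Set.uIcc_of_le hminmax.le])).intervalIntegrable
  have hint_down : IntervalIntegrable (fun φ => O (ψdown φ)) MeasureTheory.volume Φmin Φmax :=
    (hOdown.mono (by rw [Set.uIcc_of_le hminmax.le])).intervalIntegrable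
  have hmono := intervalIntegral.integral_mono_on hminmax.le
    (intervalIntegrable_const (c := δ)) (hint_up.sub hint_down)
    (fun φ hφ => hgap φ hφ)
  rw [intervalIntegral.integral_const,
    intervalIntegral.integral_sub hint_up hint_down] at hmono
  simp only [smul_eq_mul] at hmono
  linarith
end

section
/- Fix n ∈ ℕ. Let Π : ℝ → Matrix (Fin n) (Fin n) ℂ be continuously differentiable with Π(t)·Π(t) = Π(t) for all t (a smooth family of projectors), and let W : ℝ → Matrix (Fin n) (Fin n) ℂ be differentiable with W(0) = 1 and W'(t) = (Π'(t) Π(t) − Π(t) Π'(t)) · W(t) for all t (the Kato intertwiner equation Ẇ = [Π̇, Π] W). Then W transports the projector family: Π(t) · W(t) = W(t) · Π(0) for all t ∈ ℝ. -/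
attribute [local instance] Matrix.normedAddCommGroup Matrix.normedSpace

noncomputable def katoMulCLM (n : ℕ) :
    letI : TopologicalSpace (Matrix (Fin n) (Fin n) ℂ) :=
      PseudoMetricSpace.toUniformSpace.toTopologicalSpace
    Matrix (Fin n) (Fin n) ℂ →L[ℝ] Matrix (Fin n) (Fin n) ℂ →L[ℝ] Matrix (Fin n) (Fin n) ℂ :=
  LinearMap.toContinuousLinearMap
    { toFun := fun A => LinearMap.toContinuousLinearMap (LinearMap.mulLeft ℝ A)
      map_add' := fun A B => by
        ext x
        simp [LinearMap.coe_toContinuousLinearMap', LinearMap.mulLeft_apply, add_mul]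
      map_smul' := fun c A => by
        ext x
        simp [LinearMap.coe_toContinuousLinearMap', LinearMap.mulLeft_apply, smul_mul_assoc] }

@[simp] theorem katoMulCLM_apply (n : ℕ) (A B : Matrix (Fin n) (Fin n) ℂ) :
    katoMulCLM n A B = A * B := by
  simp [katoMulCLM, LinearMap.coe_toContinuousLinearMap', LinearMap.mulLeft_apply]

set_option maxHeartbeats 2000000 in
theorem kato_hasDerivAt_mul {n : ℕ} {f g : ℝ → Matrix (Fin n) (Fin n) ℂ}
    {f' g' : Matrix (Fin n) (Fin n) ℂ} {t : ℝ}
    (hf : HasDerivAt f f' t) (hg : HasDerivAt g g' t) :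
    HasDerivAt (fun s => f s * g s) (f' * g t + f t * g') t := by
  have h1 : HasDerivAt (fun s => katoMulCLM n (f s)) (katoMulCLM n f') t := by
    simpa [Function.comp_def] using
      ((katoMulCLM n).hasFDerivAt (x := f t)).comp_hasDerivAt t hf
  have h2 := h1.clm_apply hg
  simp only [katoMulCLM_apply] at h2
  exact h2

theorem kato_linear_ODE_zero {n : ℕ} (A Y : ℝ → Matrix (Fin n) (Fin n) ℂ)
    (hA : Continuous A)
    (hY : ∀ t : ℝ, HasDerivAt Y (A t * Y t) t)
    (hY0 : Y 0 = 0) : ∀ t : ℝ, Y t = 0 := by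
  intro τ
  set a : ℝ := -(|τ| + 1) with ha
  set b : ℝ := |τ| + 1 with hb
  have habs : (0:ℝ) ≤ |τ| := abs_nonneg τ
  have hab : a < b := by simp only [ha, hb]; linarith
  -- clamp function
  set u : ℝ → ℝ := fun t => max a (min t b) with hu
  have humem : ∀ t, u t ∈ Set.Icc a b := by
    intro t
    refine ⟨le_max_left _ _, max_le hab.le (min_le_right _ _)⟩
  have hueq : ∀ t ∈ Set.Icc a b, u t = t := by
    intro t ht
    simp only [hu]
    rw [min_eq_left ht.2, max_eq_right ht.1]
  -- bound on the operator norm over the compact interval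
  have hcont : ContinuousOn (fun s => ‖katoMulCLM n (A s)‖) (Set.Icc a b) :=
    (((katoMulCLM n).continuous.comp hA).norm).continuousOn
  obtain ⟨C, hC⟩ := isCompact_Icc.exists_bound_of_continuousOn hcont
  set K : NNReal := C.toNNReal with hK
  have hlip : ∀ t : ℝ, LipschitzWith K (fun x => katoMulCLM n (A (u t)) x) := by
    intro t
    refine ((katoMulCLM n (A (u t))).lipschitz).weaken ?_
    have h1 : ‖katoMulCLM n (A (u t))‖ ≤ C := by simpa using hC (u t) (humem t)
    rw [hK, ← norm_toNNReal]
    exact Real.toNNReal_mono h1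
  have hcontY : Continuous Y := by
    rw [continuous_iff_continuousAt]
    exact fun t => (hY t).continuousAt
  have h0mem : (0:ℝ) ∈ Set.Ioo a b := by
    constructor <;> [simp only [ha]; simp only [hb]] <;> linarith
  have key : Set.EqOn Y (fun _ => (0 : Matrix (Fin n) (Fin n) ℂ)) (Set.Icc a b) := by
    refine ODE_solution_unique_of_mem_Icc
      (v := fun t x => katoMulCLM n (A (u t)) x) (s := fun _ => Set.univ)
      (fun t _ => (hlip t).lipschitzOnWith) h0mem hcontY.continuousOn ?_
      (fun _ _ => Set.mem_univ _) continuousOn_const ?_ (fun _ _ => Set.mem_univ _) hY0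
    · intro t ht
      have hut := hueq t (Set.Ioo_subset_Icc_self ht)
      have hYt := hY t
      simp only [katoMulCLM_apply, hut]
      exact hYt
    · intro t ht
      simpa using hasDerivAt_const t (0 : Matrix (Fin n) (Fin n) ℂ)
  have hτ : τ ∈ Set.Icc a b := by
    constructor <;> [simp only [ha]; simp only [hb]] <;>
      [nlinarith [neg_abs_le τ]; nlinarith [le_abs_self τ]]
  exact key hτ

/-- The Kato intertwiner transports the projector family:
if `P(t)² = P(t)` (smooth family of projectors), `W 0 = 1` and
`W'(t) = [P'(t), P(t)] W(t)`, then `P(t) W(t) = W(t) P(0)` for all `t`. -/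
theorem kato_intertwiner_transports_projectors
    (n : ℕ) (P P' W : ℝ → Matrix (Fin n) (Fin n) ℂ)
    (hP : ∀ t : ℝ, HasDerivAt P (P' t) t)
    (hP'cont : Continuous P')
    (hproj : ∀ t : ℝ, P t * P t = P t)
    (hW0 : W 0 = 1)
    (hW : ∀ t : ℝ, HasDerivAt W ((P' t * P t - P t * P' t) * W t) t) :
    ∀ t : ℝ, P t * W t = W t * P 0 := by
  have hPcont : Continuous P := by
    rw [continuous_iff_continuousAt]; exact fun t => (hP t).continuousAt
  set A : ℝ → Matrix (Fin n) (Fin n) ℂ := fun s => P' s * P s - P s * P' s with hA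
  set Y : ℝ → Matrix (Fin n) (Fin n) ℂ := fun s => P s * W s - W s * P 0 with hYdef
  have hAcont : Continuous A :=
    (hP'cont.matrix_mul hPcont).sub (hPcont.matrix_mul hP'cont)
  -- Leibniz: P' = P' P + P P'
  have hPP' : ∀ s : ℝ, P' s = P' s * P s + P s * P' s := by
    intro s
    have h2 : HasDerivAt (fun t => P t * P t) (P' s * P s + P s * P' s) s :=
      kato_hasDerivAt_mul (hP s) (hP s)
    have h3 : (fun t => P t * P t) = P := funext hproj
    rw [h3] at h2
    exact (hP s).unique h2
  -- P P' P = 0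
  have h0 : ∀ s : ℝ, P s * P' s * P s = 0 := by
    intro s
    have h1 : P s * P' s = P s * P' s * P s + P s * P' s := by
      calc P s * P' s = P s * (P' s * P s + P s * P' s) := by rw [← hPP' s]
        _ = P s * P' s * P s + P s * P s * P' s := by
            rw [mul_add, ← mul_assoc, ← mul_assoc]
        _ = P s * P' s * P s + P s * P' s := by rw [hproj s]
    exact add_eq_right.mp h1.symm
  -- key algebraic identity
  have hkey : ∀ s : ℝ, A s * P s = P' s + P s * A s := by
    intro s
    have e1 : A s * P s = P' s * P s := by
      calc A s * P s = P' s * (P s * P s) - P s * P' s * P s := by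
            rw [hA]; rw [sub_mul, mul_assoc]
        _ = P' s * P s := by rw [hproj s, h0 s, sub_zero]
    have e2 : P' s + P s * A s = P' s * P s := by
      calc P' s + P s * A s
          = P' s + (P s * P' s * P s - P s * (P s * P' s)) := by
            rw [hA]; rw [mul_sub, ← mul_assoc]
        _ = P' s + (0 - P s * P s * P' s) := by rw [h0 s, ← mul_assoc]
        _ = P' s - P s * P' s := by rw [hproj s, zero_sub, sub_eq_add_neg]
        _ = (P' s * P s + P s * P' s) - P s * P' s := by rw [← hPP' s]
        _ = P' s * P s := by rw [add_sub_cancel_right]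
    rw [e1, e2]
  -- Y solves the linear ODE Y' = A Y
  have hYd : ∀ s : ℝ, HasDerivAt Y (A s * Y s) s := by
    intro s
    have hd := (kato_hasDerivAt_mul (hP s) (hW s)).sub
      (kato_hasDerivAt_mul (hW s) (hasDerivAt_const s (P 0)))
    have heq : A s * Y s =
        P' s * W s + P s * ((P' s * P s - P s * P' s) * W s) -
          ((P' s * P s - P s * P' s) * W s * P 0 + W s * 0) := by
      rw [mul_zero, add_zero]
      calc A s * Y s = A s * (P s * W s) - A s * (W s * P 0) := by
            rw [hYdef]; rw [mul_sub]
        _ = (A s * P s) * W s - (A s * W s) * P 0 := by rw [← mul_assoc, ← mul_assoc]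
        _ = (P' s + P s * A s) * W s - (A s * W s) * P 0 := by rw [hkey s]
        _ = P' s * W s + P s * (A s * W s) - A s * W s * P 0 := by
            rw [add_mul, mul_assoc]
    rw [heq]
    exact hd
  have hY0 : Y 0 = 0 := by
    simp [hYdef, hW0]
  intro t
  have := kato_linear_ODE_zero A Y hAcont hYd hY0 t
  exact sub_eq_zero.mp this
end
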